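/- Let T be the unrooted balanced binary tree on N = 2^k taxa (k ≥ 2), equipped with the quartet metrization. Then every pendant edge has weight N − 2; the central internal edge (at minimal edge-distance ℓ = k−1 from a leaf) has weight 2^{2k−3}; and each other internal edge at minimal edge-distance ℓ from a leaf, 1 ≤ ℓ ≤ k−2, has weight 2^{k+ℓ} − 7·2^{2ℓ−2}. -/
import Mathlib


open Function

/-- An unrooted phylogenetic tree on taxon set `X`, with vertex set `V`: a tree whose
degree-one vertices (leaves) are bijectively labeled by the taxa, all other vertices
having degree at least 3. -/
structure UPhylo (X V : Type*) where
  G : SimpleGraph V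
  isTree : G.IsTree
  leaf : X → V
  leaf_inj : Function.Injective leaf
  leaf_deg : ∀ x : X, (G.neighborSet (leaf x)).ncard = 1
  leaf_surj : ∀ v : V, (G.neighborSet v).ncard = 1 → ∃ x : X, leaf x = v
  internal_deg : ∀ v : V, (∀ x : X, leaf x ≠ v) → 3 ≤ (G.neighborSet v).ncard

variable {X V : Type*}

/-- An unrooted phylogenetic tree is binary if every internal vertex has degree
exactly 3. -/
def UPhylo.IsBinary (T : UPhylo X V) : Prop :=
  ∀ v : V, (T.G.neighborSet v).ncard = 1 ∨ (T.G.neighborSet v).ncard = 3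

/-- The set of taxa on the `u`-side of the edge `{u,v}`: those taxa whose leaf is still
connected to `u` after deleting the edge `{u,v}`. -/
def sideSet (G : SimpleGraph V) (leaf : X → V) (u v : V) : Set X :=
  {x | (G.deleteEdges {s(u, v)}).Reachable (leaf x) u}

/-- The tree displays the quartet `ab|cd`: some edge of the tree separates `{a,b}`
from `{c,d}` (equivalently, the induced 4-leaf tree has an internal edge separating
`a,b` from `c,d`). -/
def DisplaysQuartet (G : SimpleGraph V) (leaf : X → V) (a b c d : X) : Prop :=
  ∃ u v : V, G.Adj u v ∧ a ∈ sideSet G leaf u v ∧ b ∈ sideSet G leaf u v ∧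
    c ∈ sideSet G leaf v u ∧ d ∈ sideSet G leaf v u

/-- The tree displays the degenerate (star) quartet `abcd`: the induced 4-leaf tree on
`{a,b,c,d}` is unresolved, i.e. no pairing of the four taxa is separated by an edge. -/
def DisplaysStarQuartet (G : SimpleGraph V) (leaf : X → V) (a b c d : X) : Prop :=
  ¬ DisplaysQuartet G leaf a b c d ∧ ¬ DisplaysQuartet G leaf a c b d ∧
    ¬ DisplaysQuartet G leaf a d b c

/-- The tree displays the split `A|B`: removing some edge partitions the taxa into
`A` and `B` according to the connected components. -/
def DisplaysSplit (G : SimpleGraph V) (leaf : X → V) (A B : Set X) : Prop :=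
  ∃ u v : V, G.Adj u v ∧ A = sideSet G leaf u v ∧ B = sideSet G leaf v u

/-- Contribution at the endpoint `u` to the quartet-metrization weight of the edge
`{u,v}`: the sum `Σ_{i<i'} |X_i|·|X_{i'}|` over the branches `X_i` hanging off `u`
through the edges at `u` other than `{u,v}`. -/
noncomputable def halfW [Fintype X] [Fintype V] [DecidableEq V]
    (G : SimpleGraph V) (leaf : X → V) (u v : V) : ℕ :=
  (∑ p ∈ ((G.neighborSet u \ {v}).toFinite.toFinset).offDiag,
      (sideSet G leaf p.1 u).ncard * (sideSet G leaf p.2 u).ncard) / 2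

/-- The quartet-metrization weight of the edge `{u,v}`. For an internal edge of a
binary tree with quartet partition `X₁,X₂|X₃,X₄` this is `|X₁||X₂| + |X₃||X₄|`, and
for a pendant edge with tripartition `{x},X₁,X₂` at its internal end it is `|X₁||X₂|`. -/
noncomputable def wQ [Fintype X] [Fintype V] [DecidableEq V]
    (G : SimpleGraph V) (leaf : X → V) (u v : V) : ℕ :=
  halfW G leaf u v + halfW G leaf v u

/-- The quartet-metrization weight, as a function on undirected edges. -/
noncomputable def wQe [Fintype X] [Fintype V] [DecidableEq V]
    (G : SimpleGraph V) (leaf : X → V) : Sym2 V → ℕ :=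
  Sym2.lift ⟨fun u v => wQ G leaf u v, fun u v => by unfold wQ; exact Nat.add_comm _ _⟩

/-- Vertices of the unrooted balanced binary tree on `2^k` taxa: binary strings of
length `1, …, k` (a vertex at depth `d` from the suppressed root is a function
`Fin d → Bool`; here the first component `n : Fin k` encodes depth `d = n + 1`). -/
abbrev balV (k : ℕ) : Type := Σ n : Fin k, (Fin (n.val + 1) → Bool)

/-- The edge relation of the unrooted balanced binary tree: a vertex is joined to each
of its two one-bit extensions, and the two depth-one vertices (the children of the
suppressed root) are joined by the central edge. -/
def balRel (k : ℕ) : balV k → balV k → Prop := fun u v =>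
  (∃ h : v.1.val = u.1.val + 1,
      ∀ i : Fin (u.1.val + 1), v.2 ⟨i.val, by have := i.isLt; omega⟩ = u.2 i) ∨
  (u.1.val = 0 ∧ v.1.val = 0 ∧
      u.2 ⟨0, Nat.succ_pos _⟩ ≠ v.2 ⟨0, Nat.succ_pos _⟩)

/-- The unrooted balanced binary tree on `2^k` taxa. -/
def balG (k : ℕ) : SimpleGraph (balV k) := SimpleGraph.fromRel (balRel k)

/-- The leaf labeling of the balanced tree: the taxa are the binary strings of length
`k`, labeling the depth-`k` vertices. -/
def balLeaf (k : ℕ) (hk : 0 < k) (x : Fin k → Bool) : balV k :=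
  ⟨⟨k - 1, by omega⟩, fun i => x ⟨i.val, by have := i.isLt; omega⟩⟩

section Aux
variable {k : ℕ}

lemma balV_ext {u v : balV k} (h1 : u.1.val = v.1.val)
    (h2 : ∀ i (hi : i < u.1.val + 1) (hi' : i < v.1.val + 1), u.2 ⟨i, hi⟩ = v.2 ⟨i, hi'⟩) :
    u = v := by
  obtain ⟨⟨n, hn⟩, f⟩ := u
  obtain ⟨⟨m, hm⟩, g⟩ := v
  simp only at h1 h2
  subst h1
  have hfg : f = g := by
    funext i
    exact h2 i.val i.isLt i.isLt
  cases hfg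
  rfl

lemma balV_eq_depth {u v : balV k} (h : u = v) : u.1.val = v.1.val := by subst h; rfl

lemma balV_eq_apply {u v : balV k} (h : u = v) (i : ℕ) (h1 : i < u.1.val + 1)
    (h2 : i < v.1.val + 1) : u.2 ⟨i, h1⟩ = v.2 ⟨i, h2⟩ := by subst h; rfl

/-- `u` is a prefix of `v` (as bit strings). -/
def Pre (u v : balV k) : Prop :=
  u.1.val ≤ v.1.val ∧ ∀ i (h1 : i < u.1.val + 1) (h2 : i < v.1.val + 1),
    v.2 ⟨i, h2⟩ = u.2 ⟨i, h1⟩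

/-- `v` is a child of `u`. -/
def Chd (u v : balV k) : Prop :=
  v.1.val = u.1.val + 1 ∧ ∀ i (h1 : i < u.1.val + 1) (h2 : i < v.1.val + 1),
    v.2 ⟨i, h2⟩ = u.2 ⟨i, h1⟩

/-- `u` and `v` are the two depth-one vertices. -/
def Cnt (u v : balV k) : Prop :=
  u.1.val = 0 ∧ v.1.val = 0 ∧ u.2 ⟨0, Nat.succ_pos _⟩ ≠ v.2 ⟨0, Nat.succ_pos _⟩

lemma pre_refl (u : balV k) : Pre u u := ⟨le_rfl, fun i h1 h2 => rfl⟩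

lemma pre_trans {u v w : balV k} (h : Pre u v) (h' : Pre v w) : Pre u w := by
  obtain ⟨hd, hv⟩ := h
  obtain ⟨hd', hv'⟩ := h'
  refine ⟨hd.trans hd', fun i h1 h2 => ?_⟩
  rw [hv' i (by omega) h2, hv i h1 (by omega)]

lemma pre_antisymm {u v : balV k} (h : Pre u v) (hd : u.1.val = v.1.val) : u = v :=
  balV_ext hd (fun i h1 h2 => (h.2 i h1 h2).symm)

lemma chd_pre {u v : balV k} (h : Chd u v) : Pre u v := by
  obtain ⟨hd, hv⟩ := h
  exact ⟨by omega, hv⟩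

lemma chd_depth {u v : balV k} (h : Chd u v) : v.1.val = u.1.val + 1 := h.1

/-- ancestor of `u` at depth-index `j`. -/
def anc (u : balV k) (j : ℕ) (hj : j ≤ u.1.val) : balV k :=
  ⟨⟨j, lt_of_le_of_lt hj u.1.isLt⟩, fun i => u.2 ⟨i.val, lt_of_lt_of_le i.isLt (Nat.succ_le_succ hj)⟩⟩

@[simp] lemma anc_depth (u : balV k) (j : ℕ) (hj : j ≤ u.1.val) :
    (anc u j hj).1.val = j := rfl

lemma anc_pre (u : balV k) (j : ℕ) (hj : j ≤ u.1.val) : Pre (anc u j hj) u :=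
  ⟨hj, fun i h1 h2 => rfl⟩

lemma anc_self (u : balV k) (hj : u.1.val ≤ u.1.val) : anc u u.1.val hj = u :=
  pre_antisymm (anc_pre u _ hj) rfl

lemma anc_of_pre {v u : balV k} (h : Pre v u) (hj : v.1.val ≤ u.1.val) :
    anc u v.1.val hj = v := by
  refine balV_ext rfl (fun i h1 h2 => ?_)
  have h1' : i < v.1.val + 1 := lt_of_lt_of_le h1 le_rfl
  exact h.2 i h1' (by omega)

lemma chd_anc (u : balV k) (j : ℕ) (hj : j + 1 ≤ u.1.val) :
    Chd (anc u j (by omega)) (anc u (j+1) hj) := ⟨rfl, fun i h1 h2 => rfl⟩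

lemma pre_anc_anc (u : balV k) (i j : ℕ) (hij : i ≤ j) (hj : j ≤ u.1.val) :
    Pre (anc u i (le_trans hij hj)) (anc u j hj) := ⟨hij, fun _ _ _ => rfl⟩

/-- child of `u` with extra bit `b`. -/
def chld (u : balV k) (h : u.1.val + 1 < k) (b : Bool) : balV k :=
  ⟨⟨u.1.val + 1, h⟩, fun i => if h' : i.val < u.1.val + 1 then u.2 ⟨i.val, h'⟩ else b⟩

@[simp] lemma chld_depth (u : balV k) (h : u.1.val + 1 < k) (b : Bool) :
    (chld u h b).1.val = u.1.val + 1 := rfl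

lemma chd_chld (u : balV k) (h : u.1.val + 1 < k) (b : Bool) : Chd u (chld u h b) :=
  ⟨rfl, fun i h1 h2 => by simp only [chld, dif_pos h1]⟩

lemma chld_snd_last (u : balV k) (h : u.1.val + 1 < k) (b : Bool)
    (h2 : u.1.val + 1 < u.1.val + 1 + 1) :
    (chld u h b).2 ⟨u.1.val + 1, h2⟩ = b := by
  simp only [chld, dif_neg (lt_irrefl (u.1.val + 1))]

/-- the other depth-one vertex. -/
def cpart (u : balV k) (h : u.1.val = 0) : balV k :=
  ⟨⟨0, u.1.pos⟩, fun _ => !u.2 ⟨0, Nat.succ_pos _⟩⟩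

@[simp] lemma cpart_depth (u : balV k) (h : u.1.val = 0) : (cpart u h).1.val = 0 := rfl

lemma cnt_cpart (u : balV k) (h : u.1.val = 0) : Cnt u (cpart u h) :=
  ⟨h, rfl, by simp [cpart]⟩

lemma cnt_symm {u v : balV k} (h : Cnt u v) : Cnt v u := ⟨h.2.1, h.1, Ne.symm h.2.2⟩

lemma cnt_ne {u v : balV k} (h : Cnt u v) : u ≠ v := by
  intro he
  exact h.2.2 (balV_eq_apply he 0 (by omega) (by omega))

/-- two depth-0 vertices with bits differing from a common one are equal -/
lemma depth0_ext {u v : balV k} (hu : u.1.val = 0) (hv : v.1.val = 0)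
    (hb : u.2 ⟨0, by omega⟩ = v.2 ⟨0, by omega⟩) : u = v := by
  refine balV_ext (by omega) (fun i h1 h2 => ?_)
  have : i = 0 := by omega
  subst this
  exact hb

lemma cnt_unique {u v w : balV k} (h : Cnt u v) (h' : Cnt u w) : v = w := by
  refine depth0_ext h.2.1 h'.2.1 ?_
  have hv := h.2.2
  have hw := h'.2.2
  cases hbv : v.2 ⟨0, by omega⟩ <;> cases hbw : w.2 ⟨0, by omega⟩ <;>
    simp_all [hbv, hbw] <;> omega

lemma chd_unique {u v w : balV k} (h : Chd u w) (h' : Chd v w) : u = v := by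
  obtain ⟨hd, hv⟩ := h
  obtain ⟨hd', hv'⟩ := h'
  refine balV_ext (by omega) (fun i h1 h2 => ?_)
  rw [← hv i h1 (by omega), hv' i h2 (by omega)]

end Aux
section Aux2
variable {k : ℕ}

lemma chd_ne {u v : balV k} (h : Chd u v) : u ≠ v := by
  intro he
  have h1 := balV_eq_depth he
  have h2 := h.1
  omega

lemma balRel_iff {u v : balV k} : balRel k u v ↔ Chd u v ∨ Cnt u v := by
  constructor
  · rintro (⟨h, hv⟩ | ⟨h0, h0', hb⟩)
    · exact Or.inl ⟨h, fun i h1 h2 => hv ⟨i, h1⟩⟩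
    · exact Or.inr ⟨h0, h0', hb⟩
  · rintro (⟨h, hv⟩ | ⟨h0, h0', hb⟩)
    · exact Or.inl ⟨h, fun i => hv i.val i.isLt (by omega)⟩
    · exact Or.inr ⟨h0, h0', hb⟩

lemma adj_iff {u v : balV k} : (balG k).Adj u v ↔ Chd u v ∨ Chd v u ∨ Cnt u v := by
  rw [balG, SimpleGraph.fromRel_adj]
  constructor
  · rintro ⟨hne, h | h⟩
    · rcases balRel_iff.1 h with h' | h'
      · exact Or.inl h'
      · exact Or.inr (Or.inr h')
    · rcases balRel_iff.1 h with h' | h'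
      · exact Or.inr (Or.inl h')
      · exact Or.inr (Or.inr (cnt_symm h'))
  · rintro (h | h | h)
    · exact ⟨chd_ne h, Or.inl (balRel_iff.2 (Or.inl h))⟩
    · exact ⟨(chd_ne h).symm, Or.inr (balRel_iff.2 (Or.inl h))⟩
    · exact ⟨cnt_ne h, Or.inl (balRel_iff.2 (Or.inr h))⟩

lemma chd_eq_chld {u v : balV k} (h : Chd u v) :
    ∃ (hlt : u.1.val + 1 < k) (b : Bool), v = chld u hlt b := by
  have hd := h.1
  have hlt : u.1.val + 1 < k := by have := v.1.isLt; omega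
  refine ⟨hlt, v.2 ⟨u.1.val + 1, by omega⟩, ?_⟩
  refine balV_ext (by simpa using hd) (fun i h1 h2 => ?_)
  by_cases hc : i < u.1.val + 1
  · rw [show (chld u hlt (v.2 ⟨u.1.val + 1, by omega⟩)).2 ⟨i, h2⟩
        = u.2 ⟨i, hc⟩ from dif_pos hc]
    exact h.2 i hc h1
  · have : i = u.1.val + 1 := by omega
    subst this
    rw [show (chld u hlt (v.2 ⟨u.1.val + 1, by omega⟩)).2 ⟨u.1.val + 1, h2⟩
        = v.2 ⟨u.1.val + 1, by omega⟩ from dif_neg (lt_irrefl _)]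

lemma chd_parent_eq {u v : balV k} (h : Chd u v) (hj : u.1.val ≤ v.1.val) :
    anc v u.1.val hj = u := anc_of_pre (chd_pre h) hj

lemma cnt_eq_cpart {u v : balV k} (h : Cnt u v) : v = cpart u h.1 := by
  refine depth0_ext h.2.1 rfl ?_
  have hb := h.2.2
  have key : ∀ a b : Bool, a ≠ b → b = !a := by decide
  exact key _ _ hb

/-- Full characterization of neighbors. -/
lemma nbhd_char {u z : balV k} : (balG k).Adj u z ↔
    (∃ (h : u.1.val + 1 < k) (b : Bool), z = chld u h b) ∨
    (∃ h : 0 < u.1.val, z = anc u (u.1.val - 1) (by omega)) ∨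
    (∃ h : u.1.val = 0, z = cpart u h) := by
  rw [adj_iff]
  constructor
  · rintro (h | h | h)
    · exact Or.inl (chd_eq_chld h)
    · have hd := h.1
      refine Or.inr (Or.inl ⟨by omega, ?_⟩)
      refine balV_ext (by simp; omega) (fun i hi hi' => ?_)
      exact (h.2 i hi (by omega)).symm
    · exact Or.inr (Or.inr ⟨h.1, cnt_eq_cpart h⟩)
  · rintro (⟨h, b, rfl⟩ | ⟨h, rfl⟩ | ⟨h, rfl⟩)
    · exact Or.inl (chd_chld u h b)
    · refine Or.inr (Or.inl ?_)
      exact ⟨by simp; omega, fun i h1 h2 => rfl⟩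
    · exact Or.inr (Or.inr (cnt_cpart u h))

end Aux2
section Aux3
variable {k : ℕ}

lemma reach_invariant {V' : Type*} {G : SimpleGraph V'} {P : V' → Prop}
    (h : ∀ a b, G.Adj a b → (P a ↔ P b)) {a b : V'} (r : G.Reachable a b) :
    P a ↔ P b := by
  obtain ⟨w⟩ := r
  induction w with
  | nil => rfl
  | cons h' p ih => exact (h _ _ h').trans ih

/-- Walking up the ancestor chain avoiding the deleted edge `s(u,v)`. -/
lemma reach_anc (u v w : balV k) :
    ∀ n j (hj : j ≤ w.1.val), w.1.val - j = n →
    (∀ i (hi : j ≤ i) (hi2 : i + 1 ≤ w.1.val),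
        s(anc w i (by omega), anc w (i+1) hi2) ≠ s(u, v)) →
    ((balG k).deleteEdges {s(u,v)}).Reachable w (anc w j hj) := by
  intro n
  induction n with
  | zero =>
    intro j hj hd hedge
    have hje : j = w.1.val := by omega
    subst hje
    rw [anc_self]
  | succ n ih =>
    intro j hj hd hedge
    have hj1 : j + 1 ≤ w.1.val := by omega
    have r1 : ((balG k).deleteEdges {s(u,v)}).Reachable w (anc w (j+1) hj1) := by
      refine ih (j+1) hj1 (by omega) ?_
      intro i hi hi2
      exact hedge i (by omega) hi2
    refine r1.trans (SimpleGraph.Adj.reachable ?_)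
    rw [SimpleGraph.deleteEdges_adj]
    constructor
    · exact adj_iff.2 (Or.inr (Or.inl (chd_anc w j hj1)))
    · simp only [Set.mem_singleton_iff]
      intro hcon
      exact hedge j le_rfl hj1 (by rw [Sym2.eq_swap] at hcon; exact hcon)

variable (hk : 0 < k)

lemma not_pre_of_chd_or_cnt {p q : balV k} (hpq : Chd p q ∨ Cnt p q) : ¬ Pre q p := by
  rcases hpq with h | h
  · intro hp
    have h1 := hp.1
    have h2 := h.1
    omega
  · intro hp
    have heq := pre_antisymm hp (by have := h.1; have := h.2.1; omega : q.1.val = p.1.val)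
    subst heq
    exact h.2.2 rfl

/-- Main separation lemma: crossing an edge of the deleted graph preserves `Pre q`. -/
lemma pre_invariant {p q : balV k} (hpq : Chd p q ∨ Cnt p q) :
    ∀ a b, ((balG k).deleteEdges {s(p,q)}).Adj a b → (Pre q a ↔ Pre q b) := by
  have hqp : ¬ Pre q p := not_pre_of_chd_or_cnt hpq
  have chdcase : ∀ a b, Chd a b → s(a, b) ≠ s(p, q) → (Pre q a ↔ Pre q b) := by
    intro a b hab hne
    constructor
    · intro h
      exact pre_trans h (chd_pre hab)
    · intro h
      by_cases hqa : q.1.val ≤ a.1.val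
      · refine ⟨hqa, fun i h1 h2 => ?_⟩
        have e1 := h.1
        have e2 := hab.1
        rw [← h.2 i h1 (by omega), hab.2 i h2 (by omega)]
      · have hqb : q.1.val = b.1.val := by have e1 := h.1; have e2 := hab.1; omega
        have hbq : q = b := pre_antisymm h hqb
        rcases hpq with h' | h'
        · have hap : a = p := chd_unique (hbq ▸ hab) h'
          exact absurd (by rw [hap, hbq]) hne
        · exfalso
          have e1 := hab.1
          have e2 := h'.2.1
          have e3 := hbq ▸ e1
          omega
  intro a b hab
  rw [SimpleGraph.deleteEdges_adj, Set.mem_singleton_iff] at hab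
  obtain ⟨hadj, hne⟩ := hab
  rcases adj_iff.1 hadj with h | h | h
  · exact chdcase a b h hne
  · exact (chdcase b a h (by rwa [Sym2.eq_swap] at hne)).symm
  · have key : ∀ a' b', Cnt a' b' → s(a', b') ≠ s(p, q) → Pre q a' → False := by
      intro a' b' hc hne' hpre
      have hq0 : q.1.val = 0 := by have e1 := hpre.1; have e2 := hc.1; omega
      have haq : q = a' := pre_antisymm hpre (by have := hc.1; omega)
      rcases hpq with h' | h'
      · have := h'.1; omega
      · have hbp : b' = p := cnt_unique (haq ▸ hc) (cnt_symm h')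
        exact hne' (by rw [hbp, ← haq]; exact Sym2.eq_swap)
    constructor
    · intro hpre
      exact absurd hpre (fun hp' => key a b h hne hp')
    · intro hpre
      exact absurd hpre (fun hp' => key b a (cnt_symm h) (by rwa [Sym2.eq_swap] at hne) hp')

/-- Identification of both sides of an edge. -/
lemma sideSet_eq {p q : balV k} (hpq : Chd p q ∨ Cnt p q) :
    sideSet (balG k) (balLeaf k hk) q p = {x | Pre q (balLeaf k hk x)} ∧
    sideSet (balG k) (balLeaf k hk) p q = {x | ¬ Pre q (balLeaf k hk x)} := by
  have hqp : ¬ Pre q p := not_pre_of_chd_or_cnt hpq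
  have hinv := pre_invariant hpq
  have reach_q : ∀ x : Fin k → Bool, Pre q (balLeaf k hk x) →
      ((balG k).deleteEdges {s(p,q)}).Reachable (balLeaf k hk x) q := by
    intro x hx
    have hjq : q.1.val ≤ (balLeaf k hk x).1.val := hx.1
    have r := reach_anc p q (balLeaf k hk x) ((balLeaf k hk x).1.val - q.1.val)
      q.1.val hjq rfl ?_
    · rwa [anc_of_pre hx hjq] at r
    · intro i hi hi2 hcon
      rcases Sym2.eq_iff.1 hcon with ⟨h1, h2⟩ | ⟨h1, h2⟩
      · have hdep := balV_eq_depth h2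
        rw [anc_depth] at hdep
        omega
      · refine hqp ?_
        rw [← h1, ← h2]
        exact pre_anc_anc _ i (i+1) (by omega) hi2
  have reach_p : ∀ x : Fin k → Bool, ¬ Pre q (balLeaf k hk x) →
      ((balG k).deleteEdges {s(p,q)}).Reachable (balLeaf k hk x) p := by
    intro x hx
    set w := balLeaf k hk x with hw
    have hw0 : (0:ℕ) ≤ w.1.val := Nat.zero_le _
    have r1 : ((balG k).deleteEdges {s(p,q)}).Reachable w (anc w 0 hw0) := by
      refine reach_anc p q w (w.1.val - 0) 0 hw0 rfl ?_
      intro i hi hi2 hcon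
      rcases Sym2.eq_iff.1 hcon with ⟨h1, h2⟩ | ⟨h1, h2⟩
      · refine hx ?_; rw [← h2]; exact anc_pre w (i+1) hi2
      · refine hx ?_; rw [← h1]; exact anc_pre w i (by omega)
    have hp0 : (0:ℕ) ≤ p.1.val := Nat.zero_le _
    have r2 : ((balG k).deleteEdges {s(p,q)}).Reachable p (anc p 0 hp0) := by
      refine reach_anc p q p (p.1.val - 0) 0 hp0 rfl ?_
      intro i hi hi2 hcon
      rcases Sym2.eq_iff.1 hcon with ⟨h1, h2⟩ | ⟨h1, h2⟩
      · refine hqp ?_; rw [← h2]; exact anc_pre p (i+1) hi2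
      · refine hqp ?_; rw [← h1]; exact anc_pre p i (by omega)
    by_cases heq : anc w 0 hw0 = anc p 0 hp0
    · rw [heq] at r1
      exact r1.trans r2.symm
    · have hcnt : Cnt (anc w 0 hw0) (anc p 0 hp0) := by
        refine ⟨rfl, rfl, ?_⟩
        intro hb
        exact heq (depth0_ext rfl rfl hb)
      have hadj : ((balG k).deleteEdges {s(p,q)}).Adj (anc w 0 hw0) (anc p 0 hp0) := by
        rw [SimpleGraph.deleteEdges_adj, Set.mem_singleton_iff]
        refine ⟨adj_iff.2 (Or.inr (Or.inr hcnt)), ?_⟩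
        intro hcon
        rcases Sym2.eq_iff.1 hcon with ⟨h1, h2⟩ | ⟨h1, h2⟩
        · refine hqp ?_; rw [← h2]; exact anc_pre p 0 hp0
        · refine hx ?_; rw [← h1]; exact anc_pre w 0 hw0
      exact (r1.trans hadj.reachable).trans r2.symm
  constructor
  · ext x
    simp only [sideSet, Set.mem_setOf_eq]
    rw [show s(q, p) = s(p, q) from Sym2.eq_swap]
    constructor
    · intro hr
      have hiff := reach_invariant hinv hr
      rw [hiff]
      exact pre_refl q
    · exact reach_q x
  · ext x
    simp only [sideSet, Set.mem_setOf_eq]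
    constructor
    · intro hr
      have hiff := reach_invariant hinv hr
      intro hpre
      exact hqp (hiff.1 hpre)
    · exact reach_p x

end Aux3
section Aux4
variable {k : ℕ} (hk : 0 < k)

/-- Counting the leaves extending a given vertex. -/
lemma ncard_pre_set (q : balV k) :
    {x : Fin k → Bool | Pre q (balLeaf k hk x)}.ncard = 2 ^ (k - 1 - q.1.val) := by
  classical
  set m := q.1.val with hm
  have hmk : m < k := q.1.isLt
  have hset : {x : Fin k → Bool | Pre q (balLeaf k hk x)}
      = {x : Fin k → Bool | ∀ i (h1 : i < m + 1), x ⟨i, by omega⟩ = q.2 ⟨i, h1⟩} := by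
    ext x
    simp only [Set.mem_setOf_eq]
    constructor
    · intro h i h1
      exact h.2 i h1 (by show i < k - 1 + 1; omega)
    · intro h
      exact ⟨by show m ≤ k - 1; omega, fun i h1 h2 => h i h1⟩
  rw [hset]
  have e : {x : Fin k → Bool | ∀ i (h1 : i < m + 1), x ⟨i, by omega⟩ = q.2 ⟨i, h1⟩} ≃
      (Fin (k - 1 - m) → Bool) := by
    refine
      { toFun := fun x j => x.1 ⟨m + 1 + j.val, by have := j.isLt; omega⟩
        invFun := fun y => ⟨fun i => if h : i.val < m + 1 then q.2 ⟨i.val, h⟩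
            else y ⟨i.val - (m + 1), by have := i.isLt; omega⟩, ?_⟩
        left_inv := ?_
        right_inv := ?_ }
    · intro i h1
      exact dif_pos h1
    · intro x
      refine Subtype.ext ?_
      funext i
      by_cases hc : i.val < m + 1
      · simp only [dif_pos hc]
        have := x.2 i.val hc
        rw [← this]
      · simp only [dif_neg hc]
        have he : (⟨m + 1 + (i.val - (m + 1)), by have := i.isLt; omega⟩ : Fin k) = i :=
          Fin.ext (show m + 1 + (i.val - (m + 1)) = i.val by omega)
        exact congrArg x.1 he
    · intro y
      funext j
      have hc : ¬ (m + 1 + j.val < m + 1) := by omega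
      simp only [dif_neg hc]
      have he : (⟨m + 1 + j.val - (m + 1), by have := j.isLt; omega⟩ : Fin (k - 1 - m)) = j :=
        Fin.ext (show m + 1 + j.val - (m + 1) = j.val by omega)
      exact congrArg y he
  rw [← Nat.card_coe_set_eq, Nat.card_congr e, Nat.card_eq_fintype_card]
  simp [Fintype.card_fun]

lemma ncard_not_pre_set (q : balV k) :
    {x : Fin k → Bool | ¬ Pre q (balLeaf k hk x)}.ncard
      = 2 ^ k - 2 ^ (k - 1 - q.1.val) := by
  classical
  have h1 : {x : Fin k → Bool | ¬ Pre q (balLeaf k hk x)}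
      = {x : Fin k → Bool | Pre q (balLeaf k hk x)}ᶜ := rfl
  rw [h1]
  have h2 := Set.ncard_add_ncard_compl {x : Fin k → Bool | Pre q (balLeaf k hk x)}
  have h5 : Nat.card (Fin k → Bool) = 2 ^ k := by
    rw [Nat.card_eq_fintype_card]; simp [Fintype.card_fun]
  have h3 : (Set.univ : Set (Fin k → Bool)).ncard = 2 ^ k := by
    rw [← Nat.card_coe_set_eq, Nat.card_congr (Equiv.Set.univ _), Nat.card_eq_fintype_card]
    simp [Fintype.card_fun]
  rw [ncard_pre_set hk q] at h2
  have h4 : (2:ℕ) ^ (k - 1 - q.1.val) ≤ 2 ^ k := Nat.pow_le_pow_right (by norm_num) (by omega)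
  omega

/-- `halfW` over a two-element branch set. -/
lemma halfW_pair {w v a b : balV k} (hab : a ≠ b)
    (hset : (balG k).neighborSet w \ {v} = {a, b}) :
    halfW (balG k) (balLeaf k hk) w v =
      (sideSet (balG k) (balLeaf k hk) a w).ncard *
        (sideSet (balG k) (balLeaf k hk) b w).ncard := by
  classical
  unfold halfW
  have h1 : ((balG k).neighborSet w \ {v}).toFinite.toFinset = ({a, b} : Finset (balV k)) := by
    ext z
    rw [Set.Finite.mem_toFinset, hset]
    simp
  rw [h1]
  have h2 : ({a, b} : Finset (balV k)).offDiag = {(a, b), (b, a)} := by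
    ext z
    obtain ⟨z1, z2⟩ := z
    simp only [Finset.mem_offDiag, Finset.mem_insert, Finset.mem_singleton, Prod.mk.injEq]
    constructor
    · rintro ⟨h1' | h1', h2' | h2', h3'⟩ <;> subst h1' <;> subst h2' <;> tauto
    · rintro (⟨rfl, rfl⟩ | ⟨rfl, rfl⟩) <;> simp [hab, hab.symm]
  rw [h2]
  rw [Finset.sum_insert (by simp [Prod.ext_iff]; intro h; exact fun _ => hab h)]
  rw [Finset.sum_singleton]
  simp only
  rw [Nat.mul_comm ((sideSet (balG k) (balLeaf k hk) b w).ncard)]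
  omega

lemma halfW_empty {w v : balV k}
    (hset : (balG k).neighborSet w \ {v} = ∅) :
    halfW (balG k) (balLeaf k hk) w v = 0 := by
  classical
  unfold halfW
  have h1 : ((balG k).neighborSet w \ {v}).toFinite.toFinset = (∅ : Finset (balV k)) := by
    ext z
    rw [Set.Finite.mem_toFinset, hset]
    simp
  rw [h1]
  simp

/-- side-set cardinality: child branch. -/
lemma ncard_side_chld (w : balV k) (h : w.1.val + 1 < k) (b : Bool) :
    (sideSet (balG k) (balLeaf k hk) (chld w h b) w).ncard = 2 ^ (k - w.1.val - 2) := by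
  have := (sideSet_eq hk (Or.inl (chd_chld w h b))).1
  rw [this, ncard_pre_set hk]
  congr 1
  simp
  omega

/-- side-set cardinality: parent branch. -/
lemma ncard_side_parent (w : balV k) (h : 0 < w.1.val) :
    (sideSet (balG k) (balLeaf k hk) (anc w (w.1.val - 1) (by omega)) w).ncard
      = 2 ^ k - 2 ^ (k - 1 - w.1.val) := by
  have hchd : Chd (anc w (w.1.val - 1) (by omega)) w := ⟨by simp; omega, fun i h1 h2 => rfl⟩
  have := (sideSet_eq hk (Or.inl hchd)).2
  rw [this, ncard_not_pre_set hk]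

/-- side-set cardinality: central partner branch. -/
lemma ncard_side_cpart (w : balV k) (h : w.1.val = 0) :
    (sideSet (balG k) (balLeaf k hk) (cpart w h) w).ncard = 2 ^ (k - 1) := by
  have := (sideSet_eq hk (Or.inr (cnt_cpart w h))).1
  rw [this, ncard_pre_set hk]
  rfl

end Aux4
section Aux5
variable {k : ℕ}

lemma bool_ne_eq_not {a b : Bool} (h : a ≠ b) : a = !b := by
  cases a <;> cases b <;> simp_all

lemma chld_irrel (w : balV k) (h1 h2 : w.1.val + 1 < k) (b : Bool) :
    chld w h1 b = chld w h2 b := rfl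

lemma chld_ne_chld_not (w : balV k) (h : w.1.val + 1 < k) (b : Bool) :
    chld w h (!b) ≠ chld w h b := by
  intro he
  have := balV_eq_apply he (w.1.val + 1) (by simp) (by simp)
  rw [chld_snd_last, chld_snd_last] at this
  cases b <;> simp_all

lemma anc_ne_chld (w : balV k) (j : ℕ) (hj : j ≤ w.1.val) (h : w.1.val + 1 < k) (b : Bool) :
    anc w j hj ≠ chld w h b := by
  intro he
  have := balV_eq_depth he
  simp at this
  omega

lemma cpart_ne_chld (w : balV k) (hw : w.1.val = 0) (h : w.1.val + 1 < k) (b : Bool) :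
    cpart w hw ≠ chld w h b := by
  intro he
  have := balV_eq_depth he
  simp at this

lemma mem_nbhd_chld (w : balV k) (h : w.1.val + 1 < k) (b : Bool) :
    chld w h b ∈ (balG k).neighborSet w :=
  nbhd_char.2 (Or.inl ⟨h, b, rfl⟩)

lemma mem_nbhd_anc (w : balV k) (hp : 0 < w.1.val) :
    anc w (w.1.val - 1) (by omega) ∈ (balG k).neighborSet w :=
  nbhd_char.2 (Or.inr (Or.inl ⟨hp, rfl⟩))

lemma mem_nbhd_cpart (w : balV k) (hw : w.1.val = 0) :
    cpart w hw ∈ (balG k).neighborSet w :=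
  nbhd_char.2 (Or.inr (Or.inr ⟨hw, rfl⟩))

lemma nb_chld_pos (w : balV k) (hp : 0 < w.1.val) (h : w.1.val + 1 < k) (b : Bool) :
    (balG k).neighborSet w \ {chld w h b} =
      {anc w (w.1.val - 1) (by omega), chld w h (!b)} := by
  ext z
  simp only [Set.mem_diff, Set.mem_singleton_iff, Set.mem_insert_iff]
  constructor
  · rintro ⟨hz, hne⟩
    rcases nbhd_char.1 hz with ⟨h', b', rfl⟩ | ⟨h', rfl⟩ | ⟨h', rfl⟩
    · right
      have hb : b' = !b := by
        refine bool_ne_eq_not ?_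
        intro he
        subst he
        exact hne rfl
      rw [hb]
    · left; rfl
    · omega
  · rintro (rfl | rfl)
    · exact ⟨mem_nbhd_anc w hp, anc_ne_chld w _ _ h b⟩
    · exact ⟨mem_nbhd_chld w h (!b), chld_ne_chld_not w h b⟩

lemma nb_chld_zero (w : balV k) (hw : w.1.val = 0) (h : w.1.val + 1 < k) (b : Bool) :
    (balG k).neighborSet w \ {chld w h b} = {cpart w hw, chld w h (!b)} := by
  ext z
  simp only [Set.mem_diff, Set.mem_singleton_iff, Set.mem_insert_iff]
  constructor
  · rintro ⟨hz, hne⟩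
    rcases nbhd_char.1 hz with ⟨h', b', rfl⟩ | ⟨h', rfl⟩ | ⟨h', rfl⟩
    · right
      have hb : b' = !b := by
        refine bool_ne_eq_not ?_
        intro he
        subst he
        exact hne rfl
      rw [hb]
    · omega
    · left; rfl
  · rintro (rfl | rfl)
    · exact ⟨mem_nbhd_cpart w hw, cpart_ne_chld w hw h b⟩
    · exact ⟨mem_nbhd_chld w h (!b), chld_ne_chld_not w h b⟩

lemma nb_cpart (w : balV k) (hw : w.1.val = 0) (h : w.1.val + 1 < k) :
    (balG k).neighborSet w \ {cpart w hw} = {chld w h true, chld w h false} := by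
  ext z
  simp only [Set.mem_diff, Set.mem_singleton_iff, Set.mem_insert_iff]
  constructor
  · rintro ⟨hz, hne⟩
    rcases nbhd_char.1 hz with ⟨h', b', rfl⟩ | ⟨h', rfl⟩ | ⟨h', rfl⟩
    · cases b'
      · right; rfl
      · left; rfl
    · omega
    · exact absurd rfl hne
  · rintro (rfl | rfl)
    · exact ⟨mem_nbhd_chld w h true, fun he => cpart_ne_chld w hw h true he.symm⟩
    · exact ⟨mem_nbhd_chld w h false, fun he => cpart_ne_chld w hw h false he.symm⟩

lemma nb_parent (w : balV k) (hp : 0 < w.1.val) (h : w.1.val + 1 < k)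
    (hj : w.1.val - 1 ≤ w.1.val) :
    (balG k).neighborSet w \ {anc w (w.1.val - 1) hj} = {chld w h true, chld w h false} := by
  ext z
  simp only [Set.mem_diff, Set.mem_singleton_iff, Set.mem_insert_iff]
  constructor
  · rintro ⟨hz, hne⟩
    rcases nbhd_char.1 hz with ⟨h', b', rfl⟩ | ⟨h', rfl⟩ | ⟨h', rfl⟩
    · cases b'
      · right; rfl
      · left; rfl
    · exact absurd rfl hne
    · omega
  · rintro (rfl | rfl)
    · exact ⟨mem_nbhd_chld w h true, fun he => anc_ne_chld w _ hj h true he.symm⟩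
    · exact ⟨mem_nbhd_chld w h false, fun he => anc_ne_chld w _ hj h false he.symm⟩

lemma nb_leaf (hk2 : 2 ≤ k) (w v : balV k) (hw : w.1.val = k - 1)
    (hadj : (balG k).Adj w v) :
    (balG k).neighborSet w \ {v} = ∅ := by
  have hv : v = anc w (w.1.val - 1) (by omega) := by
    rcases nbhd_char.1 hadj with ⟨h', b', rfl⟩ | ⟨h', rfl⟩ | ⟨h', rfl⟩
    · exfalso; omega
    · rfl
    · exfalso; omega
  ext z
  simp only [Set.mem_diff, Set.mem_singleton_iff, Set.mem_empty_iff_false, iff_false]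
  rintro ⟨hz, hne⟩
  rcases nbhd_char.1 hz with ⟨h', b', rfl⟩ | ⟨h', rfl⟩ | ⟨h', rfl⟩
  · omega
  · exact hne hv.symm
  · omega

end Aux5
section Main
variable {k : ℕ}

lemma wQe_eq (hk : 0 < k) (u v : balV k) :
    wQe (balG k) (balLeaf k hk) s(u, v) =
      halfW (balG k) (balLeaf k hk) u v + halfW (balG k) (balLeaf k hk) v u := rfl

lemma part1 (hk : 2 ≤ k) (hk0 : 0 < k) (x : Fin k → Bool) (v : balV k)
    (hadj : (balG k).Adj (balLeaf k hk0 x) v) :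
    wQe (balG k) (balLeaf k hk0) s(balLeaf k hk0 x, v) = 2 ^ k - 2 := by
  set u := balLeaf k hk0 x with hu
  have hud : u.1.val = k - 1 := rfl
  have hv : v = anc u (u.1.val - 1) (by omega) := by
    rcases nbhd_char.1 hadj with ⟨h', b', rfl⟩ | ⟨h', rfl⟩ | ⟨h', rfl⟩
    · exfalso; omega
    · rfl
    · exfalso; omega
  rw [wQe_eq]
  have hW1 : halfW (balG k) (balLeaf k hk0) u v = 0 :=
    halfW_empty hk0 (nb_leaf hk u v hud hadj)
  -- v is at depth-index k-2; u is a child of v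
  have hvd : v.1.val = k - 2 := by rw [hv]; simp [hud]; omega
  have hck : v.1.val + 1 < k := by omega
  have hb : u = chld v hck (x ⟨k - 1, by omega⟩) := by
    refine balV_ext (by simp [hud]; omega) (fun i h1 h2 => ?_)
    by_cases hc : i < v.1.val + 1
    · rw [show (chld v hck (x ⟨k - 1, by omega⟩)).2 ⟨i, h2⟩ = v.2 ⟨i, hc⟩ from dif_pos hc]
      exact (balV_eq_apply hv i hc (by simp only [anc_depth]; omega)).symm
    · have hie : i = v.1.val + 1 := by omega
      subst hie
      rw [show (chld v hck (x ⟨k - 1, by omega⟩)).2 ⟨v.1.val + 1, h2⟩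
          = x ⟨k - 1, by omega⟩ from dif_neg (lt_irrefl _)]
      show x ⟨v.1.val + 1, _⟩ = x ⟨k - 1, _⟩
      congr 1
      exact Fin.ext (show v.1.val + 1 = k - 1 by omega)
  have hW2 : halfW (balG k) (balLeaf k hk0) v u = 2 ^ k - 2 := by
    rw [hb]
    by_cases hvz : 0 < v.1.val
    · rw [halfW_pair hk0 (anc_ne_chld v (v.1.val - 1) (by omega) hck _)
        (nb_chld_pos v hvz hck _), ncard_side_parent hk0 v hvz, ncard_side_chld hk0 v hck]
      have e1 : k - 1 - v.1.val = 1 := by omega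
      have e2 : k - v.1.val - 2 = 0 := by omega
      rw [e1, e2]
      norm_num
    · have hvz' : v.1.val = 0 := by omega
      rw [halfW_pair hk0 (cpart_ne_chld v hvz' hck _)
        (nb_chld_zero v hvz' hck _), ncard_side_cpart hk0 v hvz', ncard_side_chld hk0 v hck]
      have e2 : k - v.1.val - 2 = 0 := by omega
      have e3 : k = 2 := by omega
      rw [e2, e3]
      norm_num
  rw [hW1, hW2]
  omega
end Main
section Main2
variable {k : ℕ}

lemma cpart_of_adj (u v : balV k) (hu : u.1.val = 0) (hv : v.1.val = 0)
    (hadj : (balG k).Adj u v) : v = cpart u hu := by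
  rcases nbhd_char.1 hadj with ⟨h', b', rfl⟩ | ⟨h', rfl⟩ | ⟨h', rfl⟩
  · exfalso; rw [chld_depth] at hv; omega
  · exfalso; omega
  · rfl

lemma part2 (hk : 2 ≤ k) (hk0 : 0 < k) (u v : balV k) (hu : u.1.val = 0)
    (hv : v.1.val = 0) (hadj : (balG k).Adj u v) :
    wQe (balG k) (balLeaf k hk0) s(u, v) = 2 ^ (2 * k - 3) := by
  have hck : u.1.val + 1 < k := by omega
  have hck' : v.1.val + 1 < k := by omega
  have hvc : v = cpart u hu := cpart_of_adj u v hu hv hadj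
  have huc : u = cpart v hv := cpart_of_adj v u hv hu hadj.symm
  have hW : ∀ (w z : balV k) (hw : w.1.val = 0) (hcw : w.1.val + 1 < k),
      z = cpart w hw →
      halfW (balG k) (balLeaf k hk0) w z = 2 ^ (2 * k - 4) := by
    intro w z hw hcw hz
    rw [hz]
    rw [halfW_pair hk0 (chld_ne_chld_not w hcw false) (nb_cpart w hw hcw),
      ncard_side_chld hk0 w hcw, ncard_side_chld hk0 w hcw]
    rw [← pow_add]
    congr 1
    omega
  rw [wQe_eq, hW u v hu hck hvc, hW v u hv hck' huc]
  rw [show 2 * k - 3 = (2 * k - 4) + 1 by omega, pow_succ]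
  omega

lemma part3 (hk : 2 ≤ k) (hk0 : 0 < k) (u v : balV k) (hadj : (balG k).Adj u v)
    (hdep : v.1.val = u.1.val + 1) (ℓ : ℕ) (hl : ℓ = k - (v.1.val + 1))
    (hl1 : 1 ≤ ℓ) (hl2 : ℓ ≤ k - 2) :
    wQe (balG k) (balLeaf k hk0) s(u, v) = 2 ^ (k + ℓ) - 7 * 2 ^ (2 * ℓ - 2) := by
  have hvk := v.1.isLt
  have hchd : Chd u v := by
    rcases adj_iff.1 hadj with h | h | h
    · exact h
    · exfalso; have := h.1; omega
    · exfalso; have h1 := h.1; have h2 := h.2.1; omega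
  have hvlt : v.1.val + 1 < k := by omega
  have hp : 0 < v.1.val := by omega
  -- halfW at v
  have hu_eq : anc v (v.1.val - 1) (by omega) = u := by
    have h' := anc_of_pre (chd_pre hchd) (by omega : u.1.val ≤ v.1.val)
    refine Eq.trans ?_ h'
    congr 1
    omega
  have hW2 : halfW (balG k) (balLeaf k hk0) v u = 2 ^ (2 * ℓ - 2) := by
    rw [← hu_eq]
    rw [halfW_pair hk0 (chld_ne_chld_not v hvlt false) (nb_parent v hp hvlt (by omega)),
      ncard_side_chld hk0 v hvlt, ncard_side_chld hk0 v hvlt]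
    rw [← pow_add]
    congr 1
    omega
  -- halfW at u
  obtain ⟨hck, b, hv_eq⟩ := chd_eq_chld hchd
  have hW1 : halfW (balG k) (balLeaf k hk0) u v
      = (2 ^ k - 2 ^ (ℓ + 1)) * 2 ^ ℓ := by
    rw [hv_eq]
    by_cases huz : 0 < u.1.val
    · rw [halfW_pair hk0 (anc_ne_chld u (u.1.val - 1) (by omega) hck _)
        (nb_chld_pos u huz hck _), ncard_side_parent hk0 u huz, ncard_side_chld hk0 u hck]
      rw [show k - 1 - u.1.val = ℓ + 1 by omega, show k - u.1.val - 2 = ℓ by omega]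
    · have huz' : u.1.val = 0 := by omega
      rw [halfW_pair hk0 (cpart_ne_chld u huz' hck _)
        (nb_chld_zero u huz' hck _), ncard_side_cpart hk0 u huz', ncard_side_chld hk0 u hck]
      have e1 : (2:ℕ) ^ (k - 1) = 2 ^ k - 2 ^ (ℓ + 1) := by
        have e2 : ℓ + 1 = k - 1 := by omega
        have e3 : (2:ℕ) ^ k = 2 ^ (k - 1) * 2 := by
          rw [← pow_succ]
          congr 1
          omega
        rw [e2]
        omega
      rw [e1]
      rw [show k - u.1.val - 2 = ℓ by omega]
  rw [wQe_eq, hW1, hW2]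
  have f2 : (2:ℕ) ^ k * 2 ^ ℓ = 2 ^ (k + ℓ) := (pow_add 2 k ℓ).symm
  have f3 : (2:ℕ) ^ (ℓ + 1) * 2 ^ ℓ = 2 ^ (2 * ℓ + 1) := by
    rw [← pow_add]
    congr 1
    omega
  have f4 : (2:ℕ) ^ (2 * ℓ + 1) = 8 * 2 ^ (2 * ℓ - 2) := by
    rw [show 2 * ℓ + 1 = (2 * ℓ - 2) + 3 by omega, pow_add]
    ring
  have f5 : (2:ℕ) ^ (2 * ℓ + 1) ≤ 2 ^ (k + ℓ) :=
    Nat.pow_le_pow_right (by norm_num) (by omega)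
  rw [Nat.sub_mul, f2, f3]
  omega
end Main2
/-- **Theorem (quartet metrization of the balanced tree).** For `k ≥ 2`, in the
unrooted balanced binary tree on `N = 2^k` taxa equipped with the quartet metrization:
every pendant edge has weight `N - 2 = 2^k - 2`; the central edge (at minimal
edge-distance `ℓ = k - 1` from a leaf) has weight `2^(2k-3)`; and every other internal
edge at minimal edge-distance `ℓ` from a leaf, `1 ≤ ℓ ≤ k - 2` (an edge joining a
vertex of depth `d` to its parent, with `ℓ = k - d`), has weight
`2^(k+ℓ) - 7·2^(2ℓ-2)`. -/
theorem balanced_quartet_weights (k : ℕ) (hk : 2 ≤ k) :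
    (∀ (x : Fin k → Bool) (v : balV k),
      (balG k).Adj (balLeaf k (by omega) x) v →
      wQe (balG k) (balLeaf k (by omega)) s(balLeaf k (by omega) x, v) = 2 ^ k - 2) ∧
    (∀ u v : balV k, u.1.val = 0 → v.1.val = 0 → (balG k).Adj u v →
      wQe (balG k) (balLeaf k (by omega)) s(u, v) = 2 ^ (2 * k - 3)) ∧
    (∀ u v : balV k, (balG k).Adj u v → v.1.val = u.1.val + 1 →
      ∀ ℓ : ℕ, ℓ = k - (v.1.val + 1) → 1 ≤ ℓ → ℓ ≤ k - 2 →
      wQe (balG k) (balLeaf k (by omega)) s(u, v)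
        = 2 ^ (k + ℓ) - 7 * 2 ^ (2 * ℓ - 2)) := by
  refine ⟨fun x v h => part1 hk (by omega) x v h,
    fun u v hu hv h => part2 hk (by omega) u v hu hv h,
    fun u v h hdep ℓ hl hl1 hl2 => part3 hk (by omega) u v h hdep ℓ hl hl1 hl2⟩
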